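/- arXiv:2211.06237 — 8 statements merged into one kernel-verified Lean document; each statement's English description precedes it below -/
import Mathlib

section
/- Let P, P₀ ∈ ℝ^{n×n} be symmetric positive definite and c, c₀ ∈ ℝⁿ. If E(c,P) ⊆ E(c₀,P₀), then P − P₀ is positive semidefinite, i.e., vᵀ P v ≥ vᵀ P₀ v for all v ∈ ℝⁿ. -/
/-!
If `c ± y` lie in `E(c₀, P₀)`, the parallelogram law for the form `P₀` centred at `c₀` gives
`yᵀ P₀ y ≤ 1`. Every `y` with `yᵀ P y = 1` makes `c ± y` points of `E(c, P) ⊆ E(c₀, P₀)`, so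
`yᵀ P₀ y ≤ 1 = yᵀ P y` on the unit sphere of `P`, and homogeneity extends this to all `v`.
-/

open Matrix

noncomputable section

/-- The ellipsoid with center `c` and shape matrix `P`. -/
def Ellipsoid {n : ℕ} (c : Fin n → ℝ) (P : Matrix (Fin n) (Fin n) ℝ) : Set (Fin n → ℝ) :=
  {x | (x - c) ⬝ᵥ P.mulVec (x - c) ≤ 1}

namespace Matrix

variable {ι R : Type*} [Fintype ι] [CommRing R]

theorem dotProduct_mulVec_parallelogram_law (A : Matrix ι ι R)
    (x y : ι → R) :
    (x + y) ⬝ᵥ A *ᵥ (x + y) + (x - y) ⬝ᵥ A *ᵥ (x - y) =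
      2 * (x ⬝ᵥ A *ᵥ x) + 2 * (y ⬝ᵥ A *ᵥ y) := by
  simp only [mulVec_add, mulVec_sub, dotProduct_add, dotProduct_sub, add_dotProduct,
    sub_dotProduct]
  ring

theorem smul_dotProduct_mulVec_smul (A : Matrix ι ι R) (t : R) (v : ι → R) :
    (t • v) ⬝ᵥ A *ᵥ (t • v) = t ^ 2 * (v ⬝ᵥ A *ᵥ v) := by
  rw [mulVec_smul, dotProduct_smul, smul_dotProduct, smul_eq_mul, smul_eq_mul, ← mul_assoc, sq]

end Matrix

namespace Ellipsoid

variable {n : ℕ} {c c₀ : Fin n → ℝ} {P P₀ : Matrix (Fin n) (Fin n) ℝ}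

theorem add_mem_iff (y : Fin n → ℝ) : c + y ∈ Ellipsoid c P ↔ y ⬝ᵥ P *ᵥ y ≤ 1 := by
  simp only [Ellipsoid, Set.mem_ofPred_eq, add_sub_cancel_left]

theorem dotProduct_mulVec_le_one_of_add_mem_of_sub_mem (hP₀ : P₀.PosSemidef) {x y : Fin n → ℝ}
    (hadd : x + y ∈ Ellipsoid c₀ P₀) (hsub : x - y ∈ Ellipsoid c₀ P₀) :
    y ⬝ᵥ P₀ *ᵥ y ≤ 1 := by
  have hcentre : 0 ≤ (x - c₀) ⬝ᵥ P₀ *ᵥ (x - c₀) := by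
    simpa using hP₀.dotProduct_mulVec_nonneg (x - c₀)
  have hsum := dotProduct_mulVec_parallelogram_law P₀ (x - c₀) y
  rw [sub_add_eq_add_sub, sub_right_comm x c₀ y] at hsum
  change (x + y - c₀) ⬝ᵥ P₀ *ᵥ (x + y - c₀) ≤ 1 at hadd
  change (x - y - c₀) ⬝ᵥ P₀ *ᵥ (x - y - c₀) ≤ 1 at hsub
  linarith

theorem dotProduct_mulVec_le_of_subset (hP : P.PosDef) (hP₀ : P₀.PosSemidef)
    (h : Ellipsoid c P ⊆ Ellipsoid c₀ P₀) (v : Fin n → ℝ) :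
    v ⬝ᵥ P₀ *ᵥ v ≤ v ⬝ᵥ P *ᵥ v := by
  rcases eq_or_ne v 0 with rfl | hv
  · simp
  have hq : 0 < v ⬝ᵥ P *ᵥ v := by simpa using hP.dotProduct_mulVec_pos hv
  set t := (√(v ⬝ᵥ P *ᵥ v))⁻¹
  have ht : t ^ 2 * (v ⬝ᵥ P *ᵥ v) = 1 := by
    rw [inv_pow, Real.sq_sqrt hq.le, inv_mul_cancel₀ hq.ne']
  have hunit : ∀ s : ℝ, s ^ 2 = t ^ 2 → c + s • v ∈ Ellipsoid c P := fun s hs ↦ by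
    rw [add_mem_iff, smul_dotProduct_mulVec_smul, hs, ht]
  have hle := dotProduct_mulVec_le_one_of_add_mem_of_sub_mem hP₀ (h (hunit t rfl))
    (by simpa [sub_eq_add_neg, ← neg_smul] using h (hunit (-t) (neg_sq t)))
  rw [smul_dotProduct_mulVec_smul, ← ht] at hle
  exact le_of_mul_le_mul_left hle (by positivity)

end Ellipsoid

theorem stmt_2 {n : ℕ} (P P₀ : Matrix (Fin n) (Fin n) ℝ) (c c₀ : Fin n → ℝ)
    (hP : P.PosDef) (hP₀ : P₀.PosDef)
    (h : Ellipsoid c P ⊆ Ellipsoid c₀ P₀) :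
    (P - P₀).PosSemidef ∧ ∀ v : Fin n → ℝ, v ⬝ᵥ P₀.mulVec v ≤ v ⬝ᵥ P.mulVec v := by
  have hle := Ellipsoid.dotProduct_mulVec_le_of_subset hP hP₀.posSemidef h
  refine ⟨.of_dotProduct_mulVec_nonneg (hP.isHermitian.sub hP₀.isHermitian) fun v ↦ ?_, hle⟩
  simpa [sub_mulVec] using hle v
end
end

section
/- Let n ≥ 1, let λ : Fin n → ℝ satisfy λᵢ > 0 for all i, let c̄ : Fin n → ℝ, and let S := {i : c̄ᵢ ≠ 0}. Define f(β) := −β − Σ_{i ∈ S} c̄ᵢ² λᵢ β/(λᵢ β − 1), let λ_min := min_i λᵢ, and let I := (1/λ_min, ∞) if there exists i ∈ S with λᵢ = λ_min, and I := [1/λ_min, ∞) otherwise. Then f is concave on I. -/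
open Matrix

noncomputable section

/-- The minimum of the eigenvalues `λ i`, for `n ≥ 1`. -/
def lamMin {n : ℕ} (hn : 1 ≤ n) (lam : Fin n → ℝ) : ℝ :=
  Finset.univ.inf' ⟨⟨0, hn⟩, Finset.mem_univ _⟩ lam

open Classical in
/-- The dual function `ℓ_{c,P}(β) = −β − Σ_{i ∈ S(c̄)} c̄ᵢ² λᵢβ/(λᵢβ−1)`,
expressed via the eigenvalues `λ` of `P` and the coordinates `c̄` of the center
in an orthonormal eigenbasis of `P`. -/
def ellFun {n : ℕ} (lam cbar : Fin n → ℝ) (β : ℝ) : ℝ :=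
  -β - ∑ i ∈ Finset.univ.filter (fun i => cbar i ≠ 0),
    (cbar i) ^ 2 * (lam i * β / (lam i * β - 1))

open Classical in
/-- The domain `I` of the dual function: the open half-line `(1/λ_min, ∞)` if some
`i` in the support of `c̄` achieves `λ_min`, and the closed half-line `[1/λ_min, ∞)`
otherwise. -/
def ellDom {n : ℕ} (lam cbar : Fin n → ℝ) (lammin : ℝ) : Set ℝ :=
  if ∃ i, cbar i ≠ 0 ∧ lam i = lammin then Set.Ioi (1 / lammin) else Set.Ici (1 / lammin)

/-!
On `I` every `i ∈ S` satisfies `λᵢ β > 1`: at the endpoint `β = 1/λ_min` this uses that no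
`i ∈ S` attains `λ_min`. On `{β | λ β > 1}` the function `λβ/(λβ − 1) = 1 + (λβ − 1)⁻¹` is
convex, so `f` is a linear function minus a nonnegative combination of convex functions.
-/

theorem ConvexOn.sum {𝕜 E β ι : Type*} [Semiring 𝕜] [PartialOrder 𝕜] [AddCommMonoid E]
    [AddCommMonoid β] [PartialOrder β] [IsOrderedAddMonoid β] [SMul 𝕜 E] [Module 𝕜 β]
    {s : Set E} (hs : Convex 𝕜 s) {t : Finset ι} {f : ι → E → β}
    (hf : ∀ i ∈ t, ConvexOn 𝕜 s (f i)) : ConvexOn 𝕜 s (∑ i ∈ t, f i) :=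
  Finset.sum_induction f (ConvexOn 𝕜 s) (fun _ _ => ConvexOn.add) (convexOn_const 0 hs) hf

lemma convexOn_inv_mul_sub_one {a : ℝ} (ha : 0 < a) :
    ConvexOn ℝ (Set.Ioi a⁻¹) (fun x => (a * x - 1)⁻¹) := by
  let A : ℝ →ᵃ[ℝ] ℝ := AffineMap.lineMap (-1) (a - 1)
  have hA : ∀ x, A x = a * x - 1 := fun x => by
    rw [AffineMap.lineMap_apply_ring']
    ring
  have hpre : A ⁻¹' Set.Ioi 0 = Set.Ioi a⁻¹ := by
    ext x
    simp only [Set.mem_preimage, Set.mem_Ioi, hA, sub_pos, inv_lt_iff_one_lt_mul₀' ha]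
  have := (convexOn_zpow (𝕜 := ℝ) (-1)).comp_affineMap A
  rw [hpre] at this
  exact this.congr fun x _ => by simp [hA]

lemma convexOn_mul_div_mul_sub_one {a : ℝ} (ha : 0 < a) :
    ConvexOn ℝ (Set.Ioi a⁻¹) (fun x => a * x / (a * x - 1)) := by
  refine ((convexOn_inv_mul_sub_one ha).add_const 1).congr fun x hx => ?_
  show (a * x - 1)⁻¹ + 1 = a * x / (a * x - 1)
  have : a * x - 1 ≠ 0 := by
    have := (inv_lt_iff_one_lt_mul₀ ha).1 hx
    linarith
  field_simp
  ring

lemma lamMin_pos {n : ℕ} (hn : 1 ≤ n) {lam : Fin n → ℝ} (hlam : ∀ i, 0 < lam i) :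
    0 < lamMin hn lam :=
  (Finset.lt_inf'_iff _).2 fun i _ => hlam i

lemma lamMin_le {n : ℕ} (hn : 1 ≤ n) (lam : Fin n → ℝ) (i : Fin n) : lamMin hn lam ≤ lam i :=
  Finset.inf'_le lam (Finset.mem_univ i)

section ellDom

variable {n : ℕ} {lam cbar : Fin n → ℝ} {m : ℝ}

lemma convex_ellDom : Convex ℝ (ellDom lam cbar m) := by
  unfold ellDom
  split_ifs
  exacts [convex_Ioi _, convex_Ici _]

lemma ellDom_subset_Ioi_inv (hm : 0 < m) {i : Fin n} (hmi : m ≤ lam i) (hi : cbar i ≠ 0) :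
    ellDom lam cbar m ⊆ Set.Ioi (lam i)⁻¹ := by
  unfold ellDom
  rw [one_div]
  split_ifs with hmin
  · exact Set.Ioi_subset_Ioi (inv_anti₀ hm hmi)
  · have hlt : m < lam i := hmi.lt_of_ne fun he => hmin ⟨i, hi, he.symm⟩
    exact Set.Ici_subset_Ioi.2 (inv_strictAnti₀ hm hlt)

end ellDom

theorem stmt_5 {n : ℕ} (hn : 1 ≤ n) (lam cbar : Fin n → ℝ) (hlam : ∀ i, 0 < lam i) :
    ConcaveOn ℝ (ellDom lam cbar (lamMin hn lam)) (ellFun lam cbar) := by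
  have hD : Convex ℝ (ellDom lam cbar (lamMin hn lam)) := convex_ellDom
  have hsum : ConvexOn ℝ (ellDom lam cbar (lamMin hn lam))
      (∑ i ∈ Finset.univ.filter (fun i => cbar i ≠ 0),
        fun β => cbar i ^ 2 * (lam i * β / (lam i * β - 1))) := by
    refine ConvexOn.sum hD fun i hi => ?_
    have hsub := ellDom_subset_Ioi_inv (lamMin_pos hn hlam) (lamMin_le hn lam i)
      (Finset.mem_filter.1 hi).2
    exact ((convexOn_mul_div_mul_sub_one (hlam i)).subset hsub hD).smul (sq_nonneg _)
  refine ((convexOn_id hD).neg.sub hsum).congr fun β _ => ?_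
  simp [ellFun, Finset.sum_apply]
end
end

section
/- Let P ∈ ℝ^{n×n} be symmetric positive definite with spectral decomposition P = V D Vᵀ (V orthogonal, D = diag(λ₁,…,λₙ)), let c ∈ ℝⁿ, c̄ := Vᵀ c, and let λ_min(P) be the smallest eigenvalue of P. Then for every β > 1/λ_min(P), the infimum over x ∈ ℝⁿ of the Lagrangian L(x,β) := −xᵀx + β((x−c)ᵀ P (x−c) − 1) is attained and equals ℓ_{c,P}(β) := −β − Σ_{i : c̄ᵢ ≠ 0} c̄ᵢ² λᵢ β/(λᵢ β − 1). -/
/-!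
In the coordinates `y = Vᵀ x` the Lagrangian separates as
`L(x, β) = Σᵢ (λᵢβ (yᵢ - c̄ᵢ)² - yᵢ²) - β`. Positive definiteness of `P` makes every `λᵢ`
positive, so `β > 1 / λ_min` gives `λᵢβ > 1` for all `i`: each summand is then a convex
quadratic in `yᵢ` whose minimum `-c̄ᵢ² λᵢβ / (λᵢβ - 1)` is attained at `yᵢ = λᵢβ c̄ᵢ / (λᵢβ - 1)`.
As `x ↦ Vᵀ x` is onto, the infimum over `x` is the sum of these minima, minus `β`.
-/

open Matrix

noncomputable section

theorem ellFun_eq_sum_sub {n : ℕ} (lam cbar : Fin n → ℝ) (β : ℝ) :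
    ellFun lam cbar β = ∑ i, -(cbar i ^ 2 * (lam i * β / (lam i * β - 1))) - β := by
  rw [ellFun, Finset.sum_filter_of_ne (by intro i _ h hc; exact h (by rw [hc]; ring)),
    Finset.sum_neg_distrib]
  ring

theorem isLeast_range_mul_sub_sq_sub_sq {a : ℝ} (ha : 1 < a) (s : ℝ) :
    IsLeast (Set.range fun t : ℝ => a * (t - s) ^ 2 - t ^ 2) (-(s ^ 2 * (a / (a - 1)))) := by
  have ha' : 0 < a - 1 := sub_pos.mpr ha
  refine ⟨⟨a * s / (a - 1), by field_simp; ring⟩, ?_⟩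
  rintro _ ⟨t, rfl⟩
  have hgap : a * (t - s) ^ 2 - t ^ 2 - -(s ^ 2 * (a / (a - 1)))
      = ((a - 1) * t - a * s) ^ 2 / (a - 1) := by
    field_simp; ring
  exact sub_nonneg.mp (hgap ▸ by positivity)

section IsLeast

variable {ι X M : Type*} [PartialOrder M]

theorem isLeast_range_sum_apply [AddCommMonoid M] [IsOrderedAddMonoid M] [Fintype ι] {f : ι → X → M} {m : ι → M}
    (hf : ∀ i, IsLeast (Set.range (f i)) (m i)) :
    IsLeast (Set.range fun y : ι → X => ∑ i, f i (y i)) (∑ i, m i) := by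
  choose y hy using fun i => (hf i).1
  refine ⟨⟨y, Finset.sum_congr rfl fun i _ => hy i⟩, ?_⟩
  rintro _ ⟨x, rfl⟩
  exact Finset.sum_le_sum fun i _ => (hf i).2 ⟨x i, rfl⟩

theorem IsLeast.range_sub_const [AddCommGroup M] [IsOrderedAddMonoid M] {f : X → M} {m : M} (h : IsLeast (Set.range f) m) (b : M) :
    IsLeast (Set.range fun x => f x - b) (m - b) := by
  simpa [← Set.range_comp'] using
    (show Monotone (· - b) from fun _ _ h => sub_le_sub_right h b).map_isLeast h

end IsLeast

namespace Matrix

variable {n : Type*} [Fintype n] [DecidableEq n]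

theorem dotProduct_mulVec_mul_diagonal_mul_transpose (V : Matrix n n ℝ) (lam : n → ℝ)
    (z : n → ℝ) :
    z ⬝ᵥ (V * diagonal lam * Vᵀ) *ᵥ z = ∑ i, lam i * (Vᵀ *ᵥ z) i ^ 2 := by
  rw [← mulVec_mulVec, ← mulVec_mulVec, dotProduct_mulVec, ← mulVec_transpose]
  simp only [dotProduct, mulVec_diagonal]
  exact Finset.sum_congr rfl fun i _ => by ring

theorem dotProduct_self_eq_sum_transpose_mulVec_sq {V : Matrix n n ℝ} (hV : Vᵀ * V = 1)
    (x : n → ℝ) : x ⬝ᵥ x = ∑ i, (Vᵀ *ᵥ x) i ^ 2 := by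
  simpa [mul_eq_one_comm.mp hV] using dotProduct_mulVec_mul_diagonal_mul_transpose V 1 x

theorem pos_of_posDef_mul_diagonal_mul_transpose {V : Matrix n n ℝ} (hV : Vᵀ * V = 1)
    {lam : n → ℝ} (hP : (V * diagonal lam * Vᵀ).PosDef) (i : n) : 0 < lam i := by
  have hinj : Function.Injective V.mulVec := fun x y h => by
    simpa [mulVec_mulVec, hV] using congrArg (Vᵀ *ᵥ ·) h
  have hconj : Vᴴ * (V * diagonal lam * Vᵀ) * V = diagonal lam := by
    simp only [conjTranspose_eq_transpose_of_trivial, ← Matrix.mul_assoc, hV, Matrix.one_mul]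
    rw [Matrix.mul_assoc, hV, Matrix.mul_one]
  exact posDef_diagonal_iff.mp (hconj ▸ hP.conjTranspose_mul_mul_same hinj) i

end Matrix

theorem stmt_7 {n : ℕ} (P V D : Matrix (Fin n) (Fin n) ℝ) (lam : Fin n → ℝ)
    (c : Fin n → ℝ) (hP : P.PosDef)
    (hV : Vᵀ * V = 1) (hD : D = Matrix.diagonal lam) (hdec : P = V * D * Vᵀ)
    (lammin : ℝ) (hmin : ∀ i, lammin ≤ lam i) (hex : ∃ i, lam i = lammin)
    (β : ℝ) (hβ : 1 / lammin < β) :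
    IsLeast
      (Set.range fun x : Fin n → ℝ =>
        -(x ⬝ᵥ x) + β * ((x - c) ⬝ᵥ P.mulVec (x - c) - 1))
      (ellFun lam (Vᵀ.mulVec c) β) := by
  subst hdec hD
  have hlam := pos_of_posDef_mul_diagonal_mul_transpose hV hP
  have hlammin : 0 < lammin := by obtain ⟨i, rfl⟩ := hex; exact hlam i
  have hβ0 : 0 ≤ β := ((one_div_pos.mpr hlammin).trans hβ).le
  have hβlam : ∀ i, 1 < lam i * β := fun i =>
    ((div_lt_iff₀' hlammin).mp hβ).trans_le (mul_le_mul_of_nonneg_right (hmin i) hβ0)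
  have hL : ∀ x, -(x ⬝ᵥ x) + β * ((x - c) ⬝ᵥ (V * diagonal lam * Vᵀ) *ᵥ (x - c) - 1)
      = ∑ i, (lam i * β * ((Vᵀ *ᵥ x) i - (Vᵀ *ᵥ c) i) ^ 2 - (Vᵀ *ᵥ x) i ^ 2) - β := by
    intro x
    rw [dotProduct_self_eq_sum_transpose_mulVec_sq hV,
      dotProduct_mulVec_mul_diagonal_mul_transpose, mulVec_sub, mul_sub, Finset.mul_sum,
      Finset.sum_sub_distrib]
    simp only [Pi.sub_apply]
    ring_nf
  have hsurj : Function.Surjective (Vᵀ *ᵥ ·) := fun y =>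
    ⟨V *ᵥ y, by simp only [mulVec_mulVec, hV, one_mulVec]⟩
  have hleast := (isLeast_range_sum_apply fun i =>
    isLeast_range_mul_sub_sq_sub_sq (hβlam i) ((Vᵀ *ᵥ c) i)).range_sub_const β
  rw [← hsurj.range_comp] at hleast
  simpa only [hL, ellFun_eq_sum_sub, Function.comp_def] using hleast
end
end

section
/- Let P ∈ ℝ^{n×n} be symmetric positive definite, c ∈ ℝⁿ, and β₀ := 1/λ_min(P) where λ_min(P) is the smallest eigenvalue of P. The function x ↦ −xᵀx + β₀((x−c)ᵀ P (x−c) − 1) is bounded below on ℝⁿ if and only if there exists y ∈ ℝⁿ with (P − λ_min(P)·I) y = −P c. -/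
open Matrix

/-!
Write `Q = P - λ_min • 1`, which is positive semidefinite because `λ_min` is the least
eigenvalue. The Lagrangian at `β₀` equals `λ_min⁻¹ (xᵀ Q x + 2 (-P c)ᵀ x + const)`, and a
positive semidefinite quadratic `xᵀ Q x + 2 bᵀ x` is bounded below iff `b ∈ range Q`: if `Q y = b`
it equals `(x + y)ᵀ Q (x + y) - yᵀ Q y`; otherwise, since `range Q = (ker Q)ᗮ`, some `z ∈ ker Q`
has `bᵀ z ≠ 0`, and along `z` the quadratic is a nonconstant linear function.
-/

namespace Matrix

variable {m : Type*} [Fintype m]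

theorem IsHermitian.exists_mulVec_eq_or_exists_mulVec_eq_zero [DecidableEq m] {Q : Matrix m m ℝ}
    (hQ : Q.IsHermitian) (b : m → ℝ) :
    (∃ y, Q *ᵥ y = b) ∨ ∃ z, Q *ᵥ z = 0 ∧ b ⬝ᵥ z ≠ 0 := by
  by_cases hb : WithLp.toLp 2 b ∈ LinearMap.range Q.toEuclideanLin
  · obtain ⟨y, hy⟩ := hb
    exact .inl ⟨y.ofLp, by simpa using congrArg WithLp.ofLp hy⟩
  · rw [← Submodule.orthogonal_orthogonal (LinearMap.range _),
      (isSymmetric_toEuclideanLin_iff.mpr hQ).orthogonal_range] at hb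
    simp only [Submodule.mem_orthogonal, not_forall] at hb
    obtain ⟨z, hz, hbz⟩ := hb
    refine .inr ⟨z.ofLp, by simpa using congrArg WithLp.ofLp hz, ?_⟩
    simpa [EuclideanSpace.inner_eq_star_dotProduct] using hbz

theorem IsHermitian.dotProduct_mulVec_comm {Q : Matrix m m ℝ} (hQ : Q.IsHermitian)
    (x y : m → ℝ) : x ⬝ᵥ Q *ᵥ y = y ⬝ᵥ Q *ᵥ x := by
  rw [dotProduct_mulVec, ← mulVec_transpose, dotProduct_comm,
    show Qᵀ = Q from by simpa using hQ.eq]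

theorem PosSemidef.bddBelow_range_quadratic_iff [DecidableEq m] {Q : Matrix m m ℝ}
    (hQ : Q.PosSemidef) (b : m → ℝ) :
    BddBelow (Set.range fun x => x ⬝ᵥ Q *ᵥ x + 2 * (b ⬝ᵥ x)) ↔ ∃ y, Q *ᵥ y = b := by
  constructor
  · rintro ⟨M, hM⟩
    refine (hQ.isHermitian.exists_mulVec_eq_or_exists_mulVec_eq_zero b).resolve_right ?_
    rintro ⟨z, hQz, hbz⟩
    have h := hM ⟨((M - 1) / (2 * (b ⬝ᵥ z))) • z, rfl⟩
    simp only [mulVec_smul, hQz, smul_zero, dotProduct_zero, dotProduct_smul, smul_eq_mul,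
      zero_add] at h
    field_simp at h
    linarith
  · rintro ⟨y, rfl⟩
    refine ⟨-(y ⬝ᵥ Q *ᵥ y), ?_⟩
    rintro _ ⟨x, rfl⟩
    have hsq : 0 ≤ (x + y) ⬝ᵥ Q *ᵥ (x + y) := by simpa using hQ.dotProduct_mulVec_nonneg (x + y)
    have hxy := hQ.isHermitian.dotProduct_mulVec_comm x y
    simp only [mulVec_add, dotProduct_add, add_dotProduct] at hsq
    dsimp only
    rw [dotProduct_comm (Q *ᵥ y)]
    linarith

theorem IsHermitian.posSemidef_sub_smul_one [DecidableEq m] {P : Matrix m m ℝ}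
    (hP : P.IsHermitian) {μ : ℝ} (hμ : ∀ (ν : ℝ) (v : m → ℝ), v ≠ 0 → P *ᵥ v = ν • v → μ ≤ ν) :
    (P - μ • 1).PosSemidef := by
  have hQ : (P - μ • 1).IsHermitian := hP.sub (by simp [IsHermitian])
  refine hQ.posSemidef_iff_eigenvalues_nonneg.mpr fun i => ?_
  set w := hQ.eigenvectorBasis i
  have hw : w.ofLp ≠ 0 := by simpa using hQ.eigenvectorBasis.orthonormal.ne_zero i
  have hPw : P *ᵥ w.ofLp = (hQ.eigenvalues i + μ) • w.ofLp := by
    have := hQ.mulVec_eigenvectorBasis i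
    rw [sub_mulVec, smul_mulVec, one_mulVec] at this
    rw [add_smul, ← this]
    abel
  show 0 ≤ hQ.eigenvalues i
  linarith [hμ _ _ hw hPw]

theorem PosDef.pos_of_mulVec_eq_smul {P : Matrix m m ℝ} (hP : P.PosDef) {μ : ℝ} {v : m → ℝ}
    (hv : v ≠ 0) (h : P *ᵥ v = μ • v) : 0 < μ := by
  have hpos := hP.dotProduct_mulVec_pos hv
  rw [h, dotProduct_smul, smul_eq_mul, star_trivial] at hpos
  exact pos_of_mul_pos_left hpos (dotProduct_self_star_nonneg v)

end Matrix

theorem bddBelow_range_mul_add_iff {ι : Type*} {g : ι → ℝ} {a : ℝ} (ha : 0 < a) (C : ℝ) :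
    BddBelow (Set.range fun i => a * (g i + C)) ↔ BddBelow (Set.range g) := by
  let e := (OrderIso.addRight C).trans (OrderIso.mulLeft₀ a ha)
  rw [← e.bddBelow_image (s := Set.range g), ← Set.range_comp]
  rfl

theorem stmt_8 {n : ℕ} (P : Matrix (Fin n) (Fin n) ℝ) (c : Fin n → ℝ) (hP : P.PosDef)
    (lammin : ℝ)
    (hev : ∃ v : Fin n → ℝ, v ≠ 0 ∧ P.mulVec v = lammin • v)
    (hle : ∀ (μ : ℝ) (v : Fin n → ℝ), v ≠ 0 → P.mulVec v = μ • v → lammin ≤ μ) :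
    BddBelow
      (Set.range fun x : Fin n → ℝ =>
        -(x ⬝ᵥ x) + (1 / lammin) * ((x - c) ⬝ᵥ P.mulVec (x - c) - 1)) ↔
    ∃ y : Fin n → ℝ, (P - lammin • (1 : Matrix (Fin n) (Fin n) ℝ)).mulVec y = -(P.mulVec c) := by
  obtain ⟨v, hv, hPv⟩ := hev
  have hlam : 0 < lammin := hP.pos_of_mulVec_eq_smul hv hPv
  refine Iff.trans ?_ <| (bddBelow_range_mul_add_iff (one_div_pos.2 hlam) (c ⬝ᵥ P *ᵥ c - 1)).trans
    ((hP.isHermitian.posSemidef_sub_smul_one hle).bddBelow_range_quadratic_iff _)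
  congr! 3 with x
  simp only [sub_mulVec, smul_mulVec, one_mulVec, mulVec_sub, dotProduct_sub, sub_dotProduct,
    dotProduct_smul, neg_dotProduct, smul_eq_mul]
  rw [← hP.isHermitian.dotProduct_mulVec_comm x c, dotProduct_comm (P *ᵥ c) x]
  field_simp
  ring
end

section
/- Let P ∈ ℝ^{n×n} be symmetric positive definite and c ∈ ℝⁿ. Then strong duality holds for the problem of maximizing the Euclidean norm over the ellipsoid: inf { −xᵀx : x ∈ ℝⁿ, (x−c)ᵀ P (x−c) ≤ 1 } = sup { ℓ_{c,P}(β) : β ∈ I_P }. -/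
open Matrix

noncomputable section

/-- The closed Euclidean unit ball `B(0,1) = {x | xᵀx ≤ 1}`. -/
def UnitBall (n : ℕ) : Set (Fin n → ℝ) :=
  {x | x ⬝ᵥ x ≤ 1}

/-!
In eigen-coordinates `y = Vᵀx`, `c̄ = Vᵀc` the constraint is `Σ λᵢ (yᵢ - c̄ᵢ)² ≤ 1`. For `β ∈ I_P`
the Lagrangian `-|y|² + β (Σ λᵢ (yᵢ - c̄ᵢ)² - 1)` splits coordinatewise into `ℓ(β)` plus the
squares `((λᵢβ - 1) yᵢ - βλᵢc̄ᵢ)² / (λᵢβ - 1) ≥ 0`, which gives weak duality. For strong duality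
one needs a `β ∈ I_P` whose Lagrangian minimizer `yᵢ = βλᵢc̄ᵢ / (λᵢβ - 1)` lies on the boundary of
the ellipsoid. Its constraint value `h(β) = Σ λᵢc̄ᵢ² / (λᵢβ - 1)²` is continuous on `I_P` and
tends to `0` at infinity, so the intermediate value theorem applies as soon as `h ≥ 1` somewhere
on `I_P`; this is automatic when `I_P` is open, since then `h` blows up at `1/λ_min`. Otherwise
`β = 1/λ_min`, and the missing mass is put in a coordinate `j` with `λⱼ = λ_min`, `c̄ⱼ = 0`.
-/

open Finset Filter Topology

theorem dotProduct_self_eq_sum_sq {ι R : Type*} [Fintype ι] [CommSemiring R] (y : ι → R) :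
    y ⬝ᵥ y = ∑ i, y i ^ 2 := by
  simp only [dotProduct, sq]

namespace Matrix

variable {m : Type*} [Fintype m] [DecidableEq m]

theorem dotProduct_mulVec_eq_sum_of_eq_mul_diagonal {R : Type*} [CommRing R]
    {P V : Matrix m m R} {lam : m → R} (hP : P = V * diagonal lam * Vᵀ) (z : m → R) :
    z ⬝ᵥ P *ᵥ z = ∑ i, lam i * (Vᵀ *ᵥ z) i ^ 2 := by
  rw [hP, ← mulVec_mulVec, ← mulVec_mulVec, dotProduct_mulVec, ← mulVec_transpose]
  simp only [dotProduct, mulVec_diagonal]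
  exact sum_congr rfl fun i _ => by ring

theorem dotProduct_mulVec_self_of_transpose_mul_self {R : Type*} [CommRing R]
    {V : Matrix m m R} (hV : Vᵀ * V = 1) (y : m → R) :
    V *ᵥ y ⬝ᵥ V *ᵥ y = y ⬝ᵥ y := by
  rw [dotProduct_mulVec, vecMul_mulVec, ← mulVec_transpose, hV, transpose_one, one_mulVec]

theorem PosDef.pos_of_eq_mul_diagonal {P V : Matrix m m ℝ} {lam : m → ℝ} (hP : P.PosDef)
    (hV : Vᵀ * V = 1) (hdec : P = V * diagonal lam * Vᵀ) (i : m) : 0 < lam i := by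
  have hVe : Vᵀ *ᵥ (V *ᵥ Pi.single i 1) = Pi.single i 1 := by
    rw [mulVec_mulVec, hV, one_mulVec]
  have hne : V *ᵥ Pi.single i 1 ≠ 0 := by
    intro h
    simpa [h] using congr_fun hVe i
  have hpos := hP.dotProduct_mulVec_pos hne
  rw [star_trivial, dotProduct_mulVec_eq_sum_of_eq_mul_diagonal hdec, hVe] at hpos
  simpa [Pi.single_apply] using hpos

end Matrix

theorem csInf_eq_csSup_of_forall_le {α : Type*} [ConditionallyCompleteLattice α]
    {S T : Set α} {v : α} (hS : v ∈ S) (hT : v ∈ T) (h : ∀ s ∈ S, ∀ t ∈ T, t ≤ s) :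
    sInf S = sSup T :=
  (IsLeast.csInf_eq ⟨hS, fun s hs => h s hs v hT⟩).trans
    (IsGreatest.csSup_eq ⟨hT, fun t ht => h v hS t ht⟩).symm

section Lagrangian

variable {l β c y : ℝ}

theorem lagrangian_sub_sq_eq (hd : l * β ≠ 1) :
    β * (l * (y - c) ^ 2) + c ^ 2 * (l * β / (l * β - 1)) - y ^ 2
      = ((l * β - 1) * y - β * l * c) ^ 2 / (l * β - 1) := by
  have hd' : l * β - 1 ≠ 0 := sub_ne_zero.mpr hd
  rw [eq_div_iff hd']
  linear_combination c ^ 2 * div_mul_cancel₀ (l * β) hd'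

theorem sq_le_lagrangian (h1 : 1 ≤ l * β) (hc : c ≠ 0 → 1 < l * β) :
    y ^ 2 ≤ β * (l * (y - c) ^ 2) + c ^ 2 * (l * β / (l * β - 1)) := by
  by_cases hc0 : c = 0
  · subst hc0
    nlinarith [sq_nonneg y]
  · have hd : 0 < l * β - 1 := by linarith [hc hc0]
    have hsq : 0 ≤ ((l * β - 1) * y - β * l * c) ^ 2 / (l * β - 1) := by positivity
    linarith [lagrangian_sub_sq_eq (y := y) (c := c) (hc hc0).ne']

theorem sq_eq_lagrangian (hc : c ≠ 0 → l * β ≠ 1) (hy : (l * β - 1) * y = β * l * c) :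
    y ^ 2 = β * (l * (y - c) ^ 2) + c ^ 2 * (l * β / (l * β - 1)) := by
  by_cases hc0 : c = 0
  · subst hc0
    linear_combination -y * hy
  · have hsq := lagrangian_sub_sq_eq (y := y) (c := c) (hc hc0)
    rw [hy, sub_self, zero_pow two_ne_zero, zero_div] at hsq
    linarith

end Lagrangian

section EllipsoidForm

variable {ι : Type*} (lam cbar : ι → ℝ)

def lagrangeMinimizer (β : ℝ) (i : ι) : ℝ := β * lam i * cbar i / (lam i * β - 1)

variable {lam cbar} in
theorem mul_lagrangeMinimizer {β : ℝ} (hc : ∀ i, cbar i ≠ 0 → lam i * β ≠ 1) (i : ι) :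
    (lam i * β - 1) * lagrangeMinimizer lam cbar β i = β * lam i * cbar i := by
  by_cases hc0 : cbar i = 0
  · simp [lagrangeMinimizer, hc0]
  · exact mul_div_cancel₀ _ (sub_ne_zero.mpr (hc i hc0))

variable [Fintype ι]

def ellipsoidForm (y : ι → ℝ) : ℝ := ∑ i, lam i * (y i - cbar i) ^ 2

def minimizerConstraint (β : ℝ) : ℝ := ∑ i, lam i * cbar i ^ 2 / (lam i * β - 1) ^ 2

variable {lam cbar} {β : ℝ}

theorem ellipsoid_eq_preimage_ellipsoidForm {P V : Matrix ι ι ℝ} [DecidableEq ι]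
    (hdec : P = V * diagonal lam * Vᵀ) (c : ι → ℝ) :
    {x | (x - c) ⬝ᵥ P *ᵥ (x - c) ≤ 1} = (Vᵀ *ᵥ ·) ⁻¹' {y | ellipsoidForm lam (Vᵀ *ᵥ c) y ≤ 1} := by
  ext x
  show (x - c) ⬝ᵥ P *ᵥ (x - c) ≤ 1 ↔ ellipsoidForm lam (Vᵀ *ᵥ c) (Vᵀ *ᵥ x) ≤ 1
  rw [dotProduct_mulVec_eq_sum_of_eq_mul_diagonal hdec, ellipsoidForm, mulVec_sub]
  rfl

theorem image_neg_dotProduct_ellipsoid_eq {P V : Matrix ι ι ℝ} [DecidableEq ι] (hV : Vᵀ * V = 1)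
    (hdec : P = V * diagonal lam * Vᵀ) (c : ι → ℝ) :
    (fun x => -(x ⬝ᵥ x)) '' {x | (x - c) ⬝ᵥ P *ᵥ (x - c) ≤ 1}
      = (fun y => -(y ⬝ᵥ y)) '' {y | ellipsoidForm lam (Vᵀ *ᵥ c) y ≤ 1} := by
  have hV' : V * Vᵀ = 1 := mul_eq_one_comm.mp hV
  rw [ellipsoid_eq_preimage_ellipsoidForm hdec,
    ← Set.image_eq_preimage_of_inverse (f := (V *ᵥ ·))
      (fun y => by simp [mulVec_mulVec, hV]) (fun x => by simp [mulVec_mulVec, hV']),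
    Set.image_image]
  simp only [dotProduct_mulVec_self_of_transpose_mul_self hV]

theorem ellipsoidForm_lagrangeMinimizer (hc : ∀ i, cbar i ≠ 0 → lam i * β ≠ 1) :
    ellipsoidForm lam cbar (lagrangeMinimizer lam cbar β) = minimizerConstraint lam cbar β := by
  refine sum_congr rfl fun i _ => ?_
  by_cases hc0 : cbar i = 0
  · simp [lagrangeMinimizer, hc0]
  · have hd : lam i * β - 1 ≠ 0 := sub_ne_zero.mpr (hc i hc0)
    simp only [lagrangeMinimizer]
    field_simp
    ring

theorem ellipsoidForm_add_single [DecidableEq ι] {y : ι → ℝ} {j : ι} (hj : y j = cbar j) (t : ℝ) :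
    ellipsoidForm lam cbar (y + Pi.single j t) = ellipsoidForm lam cbar y + lam j * t ^ 2 := by
  rw [ellipsoidForm, ellipsoidForm, ← Fintype.sum_pi_single' j (lam j * t ^ 2), ← sum_add_distrib]
  refine sum_congr rfl fun i _ => ?_
  rcases eq_or_ne i j with rfl | hij
  · simp [hj]
  · simp [hij]

theorem continuousOn_minimizerConstraint (hlam : ∀ i, 0 ≤ lam i) {a : ℝ}
    (ha : ∀ i, cbar i ≠ 0 → 1 < lam i * a) :
    ContinuousOn (minimizerConstraint lam cbar) (Set.Ici a) := by
  refine continuousOn_finsetSum _ fun i _ => ?_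
  by_cases hc0 : cbar i = 0
  · simpa [hc0] using continuousOn_const
  · refine continuousOn_const.div (by fun_prop) fun b hb => ?_
    have hb1 : 1 < lam i * b := (ha i hc0).trans_le (mul_le_mul_of_nonneg_left hb (hlam i))
    positivity

theorem tendsto_minimizerConstraint_atTop (hlam : ∀ i, 0 < lam i) :
    Tendsto (minimizerConstraint lam cbar) atTop (𝓝 0) := by
  rw [← sum_const_zero (s := (univ : Finset ι))]
  refine tendsto_finsetSum _ fun i _ => tendsto_const_nhds.div_atTop ?_
  refine (tendsto_pow_atTop two_ne_zero).comp ?_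
  exact tendsto_atTop_add_const_right _ _ (tendsto_id.const_mul_atTop (hlam i))

theorem exists_minimizerConstraint_eq_one (hlam : ∀ i, 0 < lam i) {a : ℝ}
    (ha : ∀ i, cbar i ≠ 0 → 1 < lam i * a) (h1 : 1 ≤ minimizerConstraint lam cbar a) :
    ∃ b, a ≤ b ∧ minimizerConstraint lam cbar b = 1 := by
  obtain ⟨B, hB⟩ := ((tendsto_minimizerConstraint_atTop hlam).eventually
    (eventually_le_nhds one_pos)).exists_forall_of_atTop
  obtain ⟨b, hb, hb1⟩ := intermediate_value_Icc' (le_max_left a B)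
    ((continuousOn_minimizerConstraint (fun i => (hlam i).le) ha).mono Set.Icc_subset_Ici_self)
    ⟨hB _ (le_max_right a B), h1⟩
  exact ⟨b, hb.1, hb1⟩

end EllipsoidForm

section DualFunction

variable {n : ℕ} {lam cbar : Fin n → ℝ} {lammin β : ℝ}

theorem ellFun_eq_sum (lam cbar : Fin n → ℝ) (β : ℝ) :
    ellFun lam cbar β = -β - ∑ i, cbar i ^ 2 * (lam i * β / (lam i * β - 1)) := by
  rw [ellFun, sum_filter_of_ne]
  rintro i - h hc
  simp [hc] at h

theorem mem_ellDom_of_le {a : ℝ} (ha : a ∈ ellDom lam cbar lammin) (hab : a ≤ β) :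
    β ∈ ellDom lam cbar lammin := by
  unfold ellDom at ha ⊢
  split_ifs at ha ⊢
  exacts [ha.trans_le hab, ha.trans hab]

theorem one_div_le_of_mem_ellDom (hβ : β ∈ ellDom lam cbar lammin) : 1 / lammin ≤ β := by
  unfold ellDom at hβ
  split_ifs at hβ
  exacts [hβ.le, hβ]

theorem pos_of_mem_ellDom (h0 : 0 < lammin) (hβ : β ∈ ellDom lam cbar lammin) : 0 < β :=
  (one_div_pos.mpr h0).trans_le (one_div_le_of_mem_ellDom hβ)

theorem one_le_mul_of_mem_ellDom (h0 : 0 < lammin) (hmin : ∀ i, lammin ≤ lam i)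
    (hβ : β ∈ ellDom lam cbar lammin) (i : Fin n) : 1 ≤ lam i * β := by
  have hβ0 := pos_of_mem_ellDom h0 hβ
  have hβ' := one_div_le_of_mem_ellDom hβ
  rw [div_le_iff₀ h0] at hβ'
  nlinarith [hmin i]

theorem one_lt_mul_of_mem_ellDom (h0 : 0 < lammin) (hmin : ∀ i, lammin ≤ lam i)
    (hβ : β ∈ ellDom lam cbar lammin) {i : Fin n} (hc : cbar i ≠ 0) : 1 < lam i * β := by
  have hβ0 := pos_of_mem_ellDom h0 hβ
  unfold ellDom at hβ
  split_ifs at hβ with hcrit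
  · rw [Set.mem_Ioi, div_lt_iff₀ h0] at hβ
    nlinarith [hmin i]
  · rw [Set.mem_Ici, div_le_iff₀ h0] at hβ
    have hlt : lammin < lam i := (hmin i).lt_of_ne fun h => hcrit ⟨i, hc, h.symm⟩
    nlinarith

theorem ellFun_le_neg_dotProduct (h0 : 0 < lammin) (hmin : ∀ i, lammin ≤ lam i)
    (hβ : β ∈ ellDom lam cbar lammin) {y : Fin n → ℝ} (hy : ellipsoidForm lam cbar y ≤ 1) :
    ellFun lam cbar β ≤ -(y ⬝ᵥ y) := by
  have hsum : y ⬝ᵥ y ≤ β * ellipsoidForm lam cbar y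
      + ∑ i, cbar i ^ 2 * (lam i * β / (lam i * β - 1)) := by
    rw [ellipsoidForm, mul_sum, ← sum_add_distrib, dotProduct_self_eq_sum_sq]
    exact sum_le_sum fun i _ => sq_le_lagrangian (one_le_mul_of_mem_ellDom h0 hmin hβ i)
      (one_lt_mul_of_mem_ellDom h0 hmin hβ)
  have hβg := mul_le_mul_of_nonneg_left hy (pos_of_mem_ellDom h0 hβ).le
  rw [ellFun_eq_sum]
  linarith

theorem ellFun_eq_neg_dotProduct (hc : ∀ i, cbar i ≠ 0 → lam i * β ≠ 1) {y : Fin n → ℝ}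
    (hy : ∀ i, (lam i * β - 1) * y i = β * lam i * cbar i)
    (hg : ellipsoidForm lam cbar y = 1) :
    ellFun lam cbar β = -(y ⬝ᵥ y) := by
  have hsum : y ⬝ᵥ y = β * ellipsoidForm lam cbar y
      + ∑ i, cbar i ^ 2 * (lam i * β / (lam i * β - 1)) := by
    rw [ellipsoidForm, mul_sum, ← sum_add_distrib, dotProduct_self_eq_sum_sq]
    exact sum_congr rfl fun i _ => sq_eq_lagrangian (hc i) (hy i)
  rw [ellFun_eq_sum, hsum, hg]
  ring

end DualFunction

section StrongDuality

variable {n : ℕ} {lam cbar : Fin n → ℝ} {lammin : ℝ}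

theorem exists_saddle_of_one_le_minimizerConstraint (h0 : 0 < lammin)
    (hmin : ∀ i, lammin ≤ lam i) {a : ℝ} (ha : a ∈ ellDom lam cbar lammin)
    (h1 : 1 ≤ minimizerConstraint lam cbar a) :
    ∃ β ∈ ellDom lam cbar lammin, ∃ y, ellipsoidForm lam cbar y = 1 ∧
      ∀ i, (lam i * β - 1) * y i = β * lam i * cbar i := by
  obtain ⟨b, hab, hb⟩ := exists_minimizerConstraint_eq_one (fun i => h0.trans_le (hmin i))
    (fun i => one_lt_mul_of_mem_ellDom h0 hmin ha) h1
  have hbdom := mem_ellDom_of_le ha hab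
  have hc : ∀ i, cbar i ≠ 0 → lam i * b ≠ 1 := fun i hc =>
    (one_lt_mul_of_mem_ellDom h0 hmin hbdom hc).ne'
  exact ⟨b, hbdom, _, (ellipsoidForm_lagrangeMinimizer hc).trans hb, mul_lagrangeMinimizer hc⟩

theorem exists_one_le_minimizerConstraint (h0 : 0 < lammin) (hmin : ∀ i, lammin ≤ lam i)
    {i₀ : Fin n} (hc : cbar i₀ ≠ 0) (hi₀ : lam i₀ = lammin) :
    ∃ a ∈ ellDom lam cbar lammin, 1 ≤ minimizerConstraint lam cbar a := by
  obtain ⟨m, hm, hm1, hmc⟩ : ∃ m : ℝ, 0 < m ∧ m ≤ 1 ∧ m ≤ lammin * cbar i₀ ^ 2 :=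
    ⟨min 1 (lammin * cbar i₀ ^ 2), lt_min one_pos (by positivity), min_le_left _ _,
      min_le_right _ _⟩
  have hdom : (1 + m) / lammin ∈ ellDom lam cbar lammin := by
    rw [ellDom, if_pos ⟨i₀, hc, hi₀⟩, Set.mem_Ioi]
    gcongr
    linarith
  refine ⟨_, hdom, ?_⟩
  have hterm : 1 ≤ lam i₀ * cbar i₀ ^ 2 / (lam i₀ * ((1 + m) / lammin) - 1) ^ 2 := by
    rw [hi₀, mul_div_cancel₀ _ h0.ne', add_sub_cancel_left, one_le_div (by positivity)]
    nlinarith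
  refine hterm.trans (single_le_sum (f := fun i => lam i * cbar i ^ 2 /
    (lam i * ((1 + m) / lammin) - 1) ^ 2) (fun i _ => ?_) (mem_univ i₀))
  have hlam := (h0.trans_le (hmin i)).le
  positivity

theorem exists_saddle_point (h0 : 0 < lammin) (hmin : ∀ i, lammin ≤ lam i)
    (hex : ∃ j, lam j = lammin) :
    ∃ β ∈ ellDom lam cbar lammin, ∃ y, ellipsoidForm lam cbar y = 1 ∧
      ∀ i, (lam i * β - 1) * y i = β * lam i * cbar i := by
  by_cases hcrit : ∃ i, cbar i ≠ 0 ∧ lam i = lammin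
  · obtain ⟨i₀, hc, hi₀⟩ := hcrit
    obtain ⟨a, ha, h1⟩ := exists_one_le_minimizerConstraint h0 hmin hc hi₀
    exact exists_saddle_of_one_le_minimizerConstraint h0 hmin ha h1
  have hdom : 1 / lammin ∈ ellDom lam cbar lammin := by
    rw [ellDom, if_neg hcrit]
    exact Set.self_mem_Ici
  by_cases h1 : 1 ≤ minimizerConstraint lam cbar (1 / lammin)
  · exact exists_saddle_of_one_le_minimizerConstraint h0 hmin hdom h1
  -- At `β = 1/λ_min` the `j`-th coordinate drops out of the Lagrangian, so any mass put there
  -- keeps `y` stationary.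
  obtain ⟨j, hj⟩ := hex
  have hcj : cbar j = 0 := by
    by_contra hc
    exact hcrit ⟨j, hc, hj⟩
  have hc : ∀ i, cbar i ≠ 0 → lam i * (1 / lammin) ≠ 1 := fun i hc =>
    (one_lt_mul_of_mem_ellDom h0 hmin hdom hc).ne'
  set y₀ := lagrangeMinimizer lam cbar (1 / lammin)
  have hy₀j : y₀ j = cbar j := by simp [y₀, lagrangeMinimizer, hcj]
  refine ⟨1 / lammin, hdom,
    y₀ + Pi.single j √((1 - minimizerConstraint lam cbar (1 / lammin)) / lammin), ?_, fun i => ?_⟩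
  · rw [ellipsoidForm_add_single hy₀j, ellipsoidForm_lagrangeMinimizer hc,
      Real.sq_sqrt (div_nonneg (by linarith) h0.le), hj]
    field_simp
    ring
  · rw [Pi.add_apply, mul_add, mul_lagrangeMinimizer hc]
    rcases eq_or_ne i j with rfl | hij
    · simp [hj, h0.ne']
    · simp [hij]

theorem sInf_neg_dotProduct_eq_sSup_ellFun (h0 : 0 < lammin) (hmin : ∀ i, lammin ≤ lam i)
    (hex : ∃ j, lam j = lammin) :
    sInf ((fun y => -(y ⬝ᵥ y)) '' {y | ellipsoidForm lam cbar y ≤ 1})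
      = sSup (ellFun lam cbar '' ellDom lam cbar lammin) := by
  obtain ⟨β, hβ, y, hy, hstat⟩ := exists_saddle_point h0 hmin hex
  have hc : ∀ i, cbar i ≠ 0 → lam i * β ≠ 1 := fun i hc =>
    (one_lt_mul_of_mem_ellDom h0 hmin hβ hc).ne'
  refine csInf_eq_csSup_of_forall_le ⟨y, hy.le, rfl⟩
    ⟨β, hβ, ellFun_eq_neg_dotProduct hc hstat hy⟩ ?_
  rintro _ ⟨x, hx, rfl⟩ _ ⟨β', hβ', rfl⟩
  exact ellFun_le_neg_dotProduct h0 hmin hβ' hx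

end StrongDuality

theorem stmt_10 {n : ℕ} (P V D : Matrix (Fin n) (Fin n) ℝ) (lam : Fin n → ℝ)
    (c : Fin n → ℝ) (hP : P.PosDef)
    (hV : Vᵀ * V = 1) (hD : D = Matrix.diagonal lam) (hdec : P = V * D * Vᵀ)
    (lammin : ℝ) (hmin : ∀ i, lammin ≤ lam i) (hex : ∃ i, lam i = lammin) :
    sInf ((fun x : Fin n → ℝ => -(x ⬝ᵥ x)) '' {x | (x - c) ⬝ᵥ P.mulVec (x - c) ≤ 1}) =
      sSup (ellFun lam (Vᵀ.mulVec c) '' ellDom lam (Vᵀ.mulVec c) lammin) := by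
  subst hD
  have h0 : 0 < lammin := by
    obtain ⟨i, rfl⟩ := hex
    exact hP.pos_of_eq_mul_diagonal hV hdec i
  rw [image_neg_dotProduct_ellipsoid_eq hV hdec]
  exact sInf_neg_dotProduct_eq_sSup_ellFun h0 hmin hex
end
end

section
/- Let P ∈ ℝ^{n×n} be symmetric positive definite and c ∈ ℝⁿ. Then E(c,P) ⊆ B(0,1) if and only if there exists β ≥ 0 such that for all x ∈ ℝⁿ, −xᵀx + β((x−c)ᵀ P (x−c) − 1) ≥ −1. -/
/-!
An orthogonal change of variables `y = V (x - c)` diagonalizes `P`: the ellipsoid becomes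
`∑ dᵢ yᵢ² ≤ 1` and `‖x‖² = ‖y + b‖²` with `b = V c`. If `β dᵢ ≥ 1` for all `i`, the function
`‖y + b‖² - 1 - β (∑ dᵢ yᵢ² - 1)` is concave and maximal where `(β dᵢ - 1) yᵢ = bᵢ`; when that
maximizer lies on the boundary of the ellipsoid, the maximum is `‖y + b‖² - 1 ≤ 0` by the inclusion.
Such a `β` exists: the secular function `σ(β) = ∑ dᵢ bᵢ² / (β dᵢ - 1)²` tends to `0` at infinity,
so the intermediate value theorem gives `σ(β) = 1` unless `σ < 1` down to the pole `β = 1 / min dᵢ`.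
In that hard case the `bᵢ` with minimal `dᵢ` vanish, and the maximizer can slide along such a
coordinate to the boundary. The converse implication is immediate.
-/

open Matrix

noncomputable section

open Finset Filter Topology

namespace Matrix

variable {ι : Type*} [Fintype ι] [DecidableEq ι]

theorem mulVec_dotProduct_mulVec_of_mem_orthogonalGroup {V : Matrix ι ι ℝ}
    (hV : V ∈ orthogonalGroup ι ℝ) (u w : ι → ℝ) : (V *ᵥ u) ⬝ᵥ (V *ᵥ w) = u ⬝ᵥ w := by
  rw [dotProduct_mulVec, ← mulVec_transpose, mulVec_mulVec,
    (mem_orthogonalGroup_iff' _ _).1 hV, one_mulVec]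

theorem PosDef.exists_orthogonal_diagonalization {P : Matrix ι ι ℝ} (hP : P.PosDef) :
    ∃ V ∈ orthogonalGroup ι ℝ, ∃ d : ι → ℝ, (∀ i, 0 < d i) ∧
      ∀ v, v ⬝ᵥ P *ᵥ v = ∑ i, d i * (V *ᵥ v) i ^ 2 := by
  set V : Matrix ι ι ℝ := star hP.isHermitian.eigenvectorUnitary
  set d := hP.isHermitian.eigenvalues
  have hP' : P = Vᵀ * diagonal d * V := by
    conv_lhs => rw [hP.isHermitian.spectral_theorem]
    simp [V, d, Unitary.conjStarAlgAut_apply, star_eq_conjTranspose,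
      conjTranspose_eq_transpose_of_trivial]
  refine ⟨V, (star hP.isHermitian.eigenvectorUnitary).2, d, hP.eigenvalues_pos, fun v => ?_⟩
  rw [hP', ← mulVec_mulVec, ← mulVec_mulVec, dotProduct_mulVec, ← mulVec_transpose,
    transpose_transpose, dotProduct]
  simp only [mulVec_diagonal]
  exact sum_congr rfl fun i _ => by ring

end Matrix

namespace SLemma

variable {ι : Type*} {d b : ι → ℝ}

theorem mul_div_sub_one_eq {β : ℝ} (hb : ∀ i, β * d i = 1 → b i = 0) (i : ι) :
    (β * d i - 1) * (b i / (β * d i - 1)) = b i := by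
  rcases eq_or_ne (β * d i - 1) 0 with h | h
  · simp [h, hb i (by linarith)]
  · exact mul_div_cancel₀ _ h

variable [Fintype ι] (d b)

/-- `∑ dᵢ zᵢ²` at the critical point `zᵢ = bᵢ / (β dᵢ - 1)` of `y ↦ ‖y‖² + 2⟪b, y⟫ - β ∑ dᵢ yᵢ²`;
the junk value `bᵢ / 0 = 0` makes it continuous at a pole `β dᵢ = 1` with `bᵢ = 0`. -/
def secular (β : ℝ) : ℝ := ∑ i, d i * (b i / (β * d i - 1)) ^ 2

/-- The Moré–Sorensen conditions: `y` maximizes the Lagrangian with multiplier `β` and lies on the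
boundary of the ellipsoid. -/
def IsMoreSorensenPair (β : ℝ) (y : ι → ℝ) : Prop :=
  (∀ i, 1 ≤ β * d i) ∧ (∀ i, (β * d i - 1) * y i = b i) ∧ ∑ i, d i * y i ^ 2 = 1

variable {d b}

theorem IsMoreSorensenPair.sub_mul_le {β : ℝ} {y₀ : ι → ℝ} (h : IsMoreSorensenPair d b β y₀)
    (γ : ℝ) (y : ι → ℝ) :
    y ⬝ᵥ y + 2 * (b ⬝ᵥ y) + γ - β * (∑ i, d i * y i ^ 2 - 1) ≤ y₀ ⬝ᵥ y₀ + 2 * (b ⬝ᵥ y₀) + γ := by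
  have hterm : ∀ i, y i * y i + 2 * (b i * y i) - β * (d i * y i ^ 2) ≤
      y₀ i * y₀ i + 2 * (b i * y₀ i) - β * (d i * y₀ i ^ 2) := fun i => by
    -- the difference is `(β dᵢ - 1) (yᵢ - y₀ᵢ)²`
    rw [← h.2.1 i]
    nlinarith [mul_nonneg (sub_nonneg.2 (h.1 i)) (sq_nonneg (y i - y₀ i))]
  have hsum := sum_le_sum fun i (_ : i ∈ univ) => hterm i
  simp only [sum_sub_distrib, sum_add_distrib, ← mul_sum] at hsum
  rw [h.2.2] at hsum
  simp only [dotProduct]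
  linarith

theorem continuousOn_secular {β₁ : ℝ} (hd : ∀ i, 0 ≤ d i) (hβ₁ : ∀ i, 1 ≤ β₁ * d i)
    (hb : ∀ i, β₁ * d i = 1 → b i = 0) : ContinuousOn (secular d b) (Set.Ici β₁) := by
  refine continuousOn_finsetSum _ fun i _ => ?_
  by_cases hbi : b i = 0
  · simp only [hbi, zero_div]
    exact continuousOn_const
  have hlt : 1 < β₁ * d i := (hβ₁ i).lt_of_ne fun h => hbi (hb i h.symm)
  refine continuousOn_const.mul ((continuousOn_const.div (by fun_prop) fun β hβ => ?_).pow 2)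
  nlinarith [mul_le_mul_of_nonneg_right (Set.mem_Ici.1 hβ) (hd i)]

theorem tendsto_secular_atTop (hd : ∀ i, 0 < d i) : Tendsto (secular d b) atTop (𝓝 0) := by
  have h : ∀ i, Tendsto (fun β => d i * (b i / (β * d i - 1)) ^ 2) atTop (𝓝 0) := fun i => by
    have hden : Tendsto (fun β => β * d i - 1) atTop atTop :=
      tendsto_atTop_add_const_right _ _ (tendsto_id.atTop_mul_const (hd i))
    simpa using ((tendsto_const_nhds.div_atTop hden).pow 2).const_mul (d i)
  unfold secular
  simpa using tendsto_finsetSum univ fun i _ => h i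

theorem isMoreSorensenPair_of_secular_eq_one {β : ℝ} (hβ : ∀ i, 1 ≤ β * d i)
    (hb : ∀ i, β * d i = 1 → b i = 0) (h : secular d b β = 1) :
    IsMoreSorensenPair d b β fun i => b i / (β * d i - 1) :=
  ⟨hβ, mul_div_sub_one_eq hb, h⟩

theorem exists_isMoreSorensenPair_of_one_le_secular {β₁ : ℝ} (hd : ∀ i, 0 < d i)
    (hβ₁ : ∀ i, 1 ≤ β₁ * d i) (hb : ∀ i, β₁ * d i = 1 → b i = 0) (h : 1 ≤ secular d b β₁) :
    ∃ β y, IsMoreSorensenPair d b β y := by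
  obtain ⟨β₂, hβ₂, hβ₂₁⟩ := ((tendsto_secular_atTop hd).eventually
    (ge_mem_nhds zero_lt_one)).and (eventually_ge_atTop β₁) |>.exists
  obtain ⟨β, ⟨hβ₁β, -⟩, hβ⟩ := intermediate_value_Icc' hβ₂₁
    ((continuousOn_secular (fun i => (hd i).le) hβ₁ hb).mono Set.Icc_subset_Ici_self) ⟨hβ₂, h⟩
  have hle : ∀ i, β₁ * d i ≤ β * d i := fun i => mul_le_mul_of_nonneg_right hβ₁β (hd i).le
  exact ⟨β, _, isMoreSorensenPair_of_secular_eq_one (fun i => (hβ₁ i).trans (hle i))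
    (fun i hi => hb i (le_antisymm (hi ▸ hle i) (hβ₁ i))) hβ⟩

theorem exists_isMoreSorensenPair_of_secular_le_one {β : ℝ} {j : ι} (hd : ∀ i, 0 < d i)
    (hβ : ∀ i, 1 ≤ β * d i) (hj : β * d j = 1) (hb : ∀ i, β * d i = 1 → b i = 0)
    (h : secular d b β ≤ 1) : ∃ y, IsMoreSorensenPair d b β y := by
  classical
  -- the hard case: the critical point is pushed onto the boundary along the flat direction `j`
  set z : ι → ℝ := fun i => b i / (β * d i - 1)
  set t := √((1 - secular d b β) / d j)
  have hzj : z j = 0 := by simp [z, hb j hj]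
  refine ⟨Function.update z j t, hβ, fun i => ?_, ?_⟩
  · rcases eq_or_ne i j with rfl | hi
    · simp [hj, hb i hj]
    · rw [Function.update_of_ne hi]
      exact mul_div_sub_one_eq hb i
  · have hterm : ∀ i, d i * Function.update z j t i ^ 2 =
        d i * z i ^ 2 + if i = j then d j * t ^ 2 else 0 := fun i => by
      rcases eq_or_ne i j with rfl | hi
      · simp [hzj]
      · simp [hi]
    have ht : d j * t ^ 2 = 1 - secular d b β := by
      rw [Real.sq_sqrt (div_nonneg (by linarith) (hd j).le), mul_div_cancel₀ _ (hd j).ne']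
    simp only [hterm, sum_add_distrib, sum_ite_eq', mem_univ, if_true, ht]
    simp [secular, z]

theorem exists_isMoreSorensenPair [Nonempty ι] (hd : ∀ i, 0 < d i) :
    ∃ β y, IsMoreSorensenPair d b β y := by
  obtain ⟨j₀, hj₀⟩ := Finite.exists_min d
  set β₀ := (d j₀)⁻¹
  have hβ₀ : ∀ i, 1 ≤ β₀ * d i := fun i => by
    rw [le_inv_mul_iff₀ (hd j₀), mul_one]; exact hj₀ i
  have hβ₀j₀ : β₀ * d j₀ = 1 := inv_mul_cancel₀ (hd j₀).ne'
  by_cases hb : ∀ i, β₀ * d i = 1 → b i = 0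
  · by_cases h1 : 1 ≤ secular d b β₀
    · exact exists_isMoreSorensenPair_of_one_le_secular hd hβ₀ hb h1
    · exact ⟨β₀, exists_isMoreSorensenPair_of_secular_le_one hd hβ₀ hβ₀j₀ hb (not_le.1 h1).le⟩
  push Not at hb
  obtain ⟨j, hj, hbj⟩ := hb
  -- `secular` has a genuine pole at `β₀`; at `β₁` its `j`-th term alone equals `1`
  set δ := √(d j) * |b j|
  have hδ : 0 < δ := mul_pos (Real.sqrt_pos.2 (hd j)) (abs_pos.2 hbj)
  set β₁ := β₀ + δ / d j
  have hβ₁ : ∀ i, 1 < β₁ * d i := fun i => by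
    have : 0 < δ / d j * d i := mul_pos (div_pos hδ (hd j)) (hd i)
    linarith [hβ₀ i, add_mul β₀ (δ / d j) (d i)]
  refine exists_isMoreSorensenPair_of_one_le_secular hd (fun i => (hβ₁ i).le)
    (fun i hi => absurd hi (hβ₁ i).ne') ?_
  have hden : β₁ * d j - 1 = δ := by
    rw [add_mul, hj, div_mul_cancel₀ _ (hd j).ne']; ring
  calc 1 = d j * (b j / (β₁ * d j - 1)) ^ 2 := by
        rw [hden, div_pow, mul_pow, Real.sq_sqrt (hd j).le, sq_abs]
        field_simp [(hd j).ne', hbj]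
    _ ≤ secular d b β₁ :=
        single_le_sum (f := fun i => d i * (b i / (β₁ * d i - 1)) ^ 2)
          (fun i _ => mul_nonneg (hd i).le (sq_nonneg _)) (mem_univ j)

theorem exists_nonneg_le_mul_of_forall_le_one (hd : ∀ i, 0 < d i) (γ : ℝ)
    (H : ∀ y : ι → ℝ, ∑ i, d i * y i ^ 2 ≤ 1 → y ⬝ᵥ y + 2 * (b ⬝ᵥ y) + γ ≤ 0) :
    ∃ β, 0 ≤ β ∧ ∀ y : ι → ℝ, y ⬝ᵥ y + 2 * (b ⬝ᵥ y) + γ ≤ β * (∑ i, d i * y i ^ 2 - 1) := by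
  cases isEmpty_or_nonempty ι with
  | inl hι => exact ⟨0, le_rfl, fun y => by simpa using H 0 (by simp)⟩
  | inr hι =>
    obtain ⟨β, y₀, h⟩ := exists_isMoreSorensenPair (b := b) hd
    obtain ⟨i⟩ := hι
    refine ⟨β, ?_, fun y => ?_⟩
    · exact (pos_of_mul_pos_left (one_pos.trans_le (h.1 i)) (hd i).le).le
    · linarith [h.sub_mul_le γ y, H y₀ h.2.2.le]

end SLemma

theorem stmt_13 {n : ℕ} (P : Matrix (Fin n) (Fin n) ℝ) (c : Fin n → ℝ) (hP : P.PosDef) :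
    Ellipsoid c P ⊆ UnitBall n ↔
      ∃ β : ℝ, 0 ≤ β ∧ ∀ x : Fin n → ℝ,
        -(x ⬝ᵥ x) + β * ((x - c) ⬝ᵥ P.mulVec (x - c) - 1) ≥ -1 := by
  refine ⟨fun hsub => ?_, fun ⟨β, hβ, h⟩ x hx => ?_⟩
  · obtain ⟨V, hV, d, hd, hPV⟩ := hP.exists_orthogonal_diagonalization
    set b := V *ᵥ c
    have hexpand : ∀ y, (y + b) ⬝ᵥ (y + b) = y ⬝ᵥ y + 2 * (b ⬝ᵥ y) + b ⬝ᵥ b := fun y => by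
      simp only [add_dotProduct, dotProduct_add, dotProduct_comm y b]; ring
    have hnorm : ∀ x, x ⬝ᵥ x = (V *ᵥ (x - c) + b) ⬝ᵥ (V *ᵥ (x - c) + b) := fun x => by
      rw [← mulVec_add, sub_add_cancel, mulVec_dotProduct_mulVec_of_mem_orthogonalGroup hV]
    obtain ⟨β, hβ, h⟩ := SLemma.exists_nonneg_le_mul_of_forall_le_one hd (b ⬝ᵥ b - 1) fun y hy => by
      have hy' : V *ᵥ (Vᵀ *ᵥ y + c - c) = y := by
        rw [add_sub_cancel_right, mulVec_mulVec, (mem_orthogonalGroup_iff _ _).1 hV, one_mulVec]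
      have hx : (Vᵀ *ᵥ y + c) ⬝ᵥ (Vᵀ *ᵥ y + c) ≤ 1 := hsub <| by
        show (Vᵀ *ᵥ y + c - c) ⬝ᵥ P *ᵥ (Vᵀ *ᵥ y + c - c) ≤ 1
        rwa [hPV, hy']
      rw [hnorm, hy', hexpand] at hx
      linarith
    refine ⟨β, hβ, fun x => ?_⟩
    rw [hPV, hnorm, hexpand]
    linarith [h (V *ᵥ (x - c))]
  · have : β * ((x - c) ⬝ᵥ P *ᵥ (x - c) - 1) ≤ 0 :=
      mul_nonpos_of_nonneg_of_nonpos hβ (sub_nonpos.2 hx)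
    show x ⬝ᵥ x ≤ 1
    linarith [h x]
end
end

section
/- Let P ∈ ℝ^{n×n} be symmetric positive definite and c ∈ ℝⁿ. Then E(c,P) ⊆ B(0,1) if and only if there exists β ≥ 0 such that the (n+1)×(n+1) block matrix F(β) := [[βP − I, −βPc], [−β(Pc)ᵀ, β(cᵀPc − 1) + 1]] is positive semidefinite. -/
open Matrix

noncomputable section

/-- The symmetric block matrix
`F(β) = [[βP − I, −βPc], [−β(Pc)ᵀ, β(cᵀPc − 1) + 1]]`. -/
def Fmat {n : ℕ} (P : Matrix (Fin n) (Fin n) ℝ) (c : Fin n → ℝ) (β : ℝ) :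
    Matrix (Fin n ⊕ Fin 1) (Fin n ⊕ Fin 1) ℝ :=
  Matrix.fromBlocks (β • P - 1)
    (Matrix.of fun i (_ : Fin 1) => -β * P.mulVec c i)
    (Matrix.of fun (_ : Fin 1) j => -β * P.mulVec c j)
    (Matrix.of fun (_ : Fin 1) (_ : Fin 1) => β * (c ⬝ᵥ P.mulVec c - 1) + 1)

/-!
Evaluated at `(x, t)`, the quadratic form of `Fmat P c β` is
`β (x - t c)ᵀ P (x - t c) - xᵀx + t² (1 - β)`; dehomogenising at `t = 1`, positive
semidefiniteness says exactly that `|y + c|² ≤ 1 + β (yᵀPy - 1)` for all `y`, which gives the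
inclusion at once.

Conversely (the S-lemma for this pair of quadratics), let `y₀` maximise `|y + c|²` on the compact
boundary `yᵀPy = 1` of the centred ellipsoid. Then `y₀` also maximises the linearisation
`(y₀ + c)ᵀy` there, and Cauchy–Schwarz for the inner product given by `P` turns this into the
multiplier rule `y₀ + c = β P y₀` with `β = (y₀ + c)ᵀy₀ ≥ 0`. Around `y₀` the Lagrangian
`|y + c|² - β yᵀPy` is a quadratic with Hessian `-(βP - I)`. It is maximal at `y₀` along the chords
of the boundary through `y₀`, which point in every direction off a hyperplane, so `βP - I ⪰ 0`;
hence the Lagrangian is maximal at `y₀` on the whole space, which is the required inequality.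
-/

namespace Matrix

theorem PosDef.isSymm {ι : Type*} {P : Matrix ι ι ℝ} (hP : P.PosDef) : P.IsSymm :=
  isHermitian_iff_isSymm.1 hP.isHermitian

variable {ι : Type*} [Fintype ι]

theorem IsSymm.dotProduct_mulVec_comm {α : Type*} [CommSemiring α] {M : Matrix ι ι α}
    (hM : M.IsSymm) (x y : ι → α) : x ⬝ᵥ M *ᵥ y = y ⬝ᵥ M *ᵥ x := by
  rw [← dotProduct_transpose_mulVec, hM.eq]

theorem IsSymm.add_dotProduct_mulVec_add {α : Type*} [CommRing α] {M : Matrix ι ι α}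
    (hM : M.IsSymm) (x y : ι → α) :
    (x + y) ⬝ᵥ M *ᵥ (x + y) = x ⬝ᵥ M *ᵥ x + 2 * (x ⬝ᵥ M *ᵥ y) + y ⬝ᵥ M *ᵥ y := by
  rw [mulVec_add, dotProduct_add, add_dotProduct, add_dotProduct, hM.dotProduct_mulVec_comm y x]
  ring

theorem add_dotProduct_add_self {α : Type*} [CommRing α] (x y : ι → α) :
    (x + y) ⬝ᵥ (x + y) = x ⬝ᵥ x + 2 * (x ⬝ᵥ y) + y ⬝ᵥ y := by
  rw [dotProduct_add, add_dotProduct, add_dotProduct, dotProduct_comm y x]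
  ring

theorem dotProduct_smul_sub_one_mulVec [DecidableEq ι] (P : Matrix ι ι ℝ) (β : ℝ) (d : ι → ℝ) :
    d ⬝ᵥ (β • P - 1) *ᵥ d = β * (d ⬝ᵥ P *ᵥ d) - d ⬝ᵥ d := by
  rw [sub_mulVec, smul_mulVec, one_mulVec, dotProduct_sub, dotProduct_smul, smul_eq_mul]

theorem continuous_dotProduct_mulVec_self (M : Matrix ι ι ℝ) :
    Continuous fun y : ι → ℝ => y ⬝ᵥ M *ᵥ y := by
  fun_prop

theorem Continuous.nonneg_of_forall_dotProduct_ne_zero {φ : (ι → ℝ) → ℝ} (hφ : Continuous φ)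
    {a : ι → ℝ} (ha : a ≠ 0) (h : ∀ v, a ⬝ᵥ v ≠ 0 → 0 ≤ φ v) (v : ι → ℝ) : 0 ≤ φ v := by
  have haa : 0 < a ⬝ᵥ a := by simpa using dotProduct_self_star_pos_iff.2 ha
  -- `a ⬝ᵥ (v + ε • a)` vanishes for a single value of `ε`
  have hline : {-(a ⬝ᵥ v) / (a ⬝ᵥ a)}ᶜ ⊆ {ε : ℝ | 0 ≤ φ (v + ε • a)} := by
    refine fun ε hε => h _ fun h0 => hε ?_
    rw [dotProduct_add, dotProduct_smul, smul_eq_mul] at h0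
    rw [Set.mem_singleton_iff]
    field_simp
    linarith
  have := closure_minimal hline (isClosed_le continuous_const (by fun_prop))
  rw [(dense_compl_singleton _).closure_eq] at this
  simpa using this (Set.mem_univ 0)

theorem dotProduct_le_of_add_dotProduct_add_le {c y₀ y : ι → ℝ}
    (h : (y + c) ⬝ᵥ (y + c) ≤ (y₀ + c) ⬝ᵥ (y₀ + c)) : (y₀ + c) ⬝ᵥ y ≤ (y₀ + c) ⬝ᵥ y₀ := by
  rw [← add_sub_cancel y₀ y, add_right_comm, add_dotProduct_add_self, dotProduct_sub] at h
  have hsq := dotProduct_self_star_nonneg (y - y₀)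
  rw [star_trivial] at hsq
  linarith

namespace PosDef

variable {P : Matrix ι ι ℝ}

theorem exists_pos_mul_norm_sq_le (hP : P.PosDef) :
    ∃ m > 0, ∀ y : ι → ℝ, m * ‖y‖ ^ 2 ≤ y ⬝ᵥ P *ᵥ y := by
  rcases subsingleton_or_nontrivial (ι → ℝ) with _ | _
  · exact ⟨1, one_pos, fun y => by simp [Subsingleton.elim y 0]⟩
  obtain ⟨u, hu, hmin⟩ := (isCompact_sphere (0 : ι → ℝ) 1).exists_isMinOn
    (NormedSpace.sphere_nonempty.2 zero_le_one) (continuous_dotProduct_mulVec_self P).continuousOn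
  have hu0 : u ≠ 0 := ne_zero_of_mem_unit_sphere ⟨u, hu⟩
  refine ⟨u ⬝ᵥ P *ᵥ u, by simpa using hP.dotProduct_mulVec_pos hu0, fun y => ?_⟩
  rcases eq_or_ne y 0 with rfl | hy
  · simp
  have hmin_y := hmin (show ‖y‖⁻¹ • y ∈ Metric.sphere (0 : ι → ℝ) 1 by simp [norm_smul, hy])
  simp only [Set.mem_ofPred_eq, mulVec_smul, dotProduct_smul, smul_dotProduct,
    smul_eq_mul] at hmin_y
  have hn : 0 < ‖y‖ := norm_pos_iff.2 hy
  calc u ⬝ᵥ P *ᵥ u * ‖y‖ ^ 2 ≤ ‖y‖⁻¹ * (‖y‖⁻¹ * (y ⬝ᵥ P *ᵥ y)) * ‖y‖ ^ 2 := by gcongr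
    _ = y ⬝ᵥ P *ᵥ y := by field_simp

theorem isCompact_setOf_dotProduct_mulVec_eq_one (hP : P.PosDef) :
    IsCompact {y : ι → ℝ | y ⬝ᵥ P *ᵥ y = 1} := by
  obtain ⟨m, hm, hle⟩ := hP.exists_pos_mul_norm_sq_le
  refine Metric.isCompact_of_isClosed_isBounded
    (isClosed_eq (continuous_dotProduct_mulVec_self P) continuous_const)
    (isBounded_iff_forall_norm_le.2 ⟨1 + 1 / m, fun y hy => ?_⟩)
  have : ‖y‖ ^ 2 ≤ 1 / m := by
    rw [le_div_iff₀ hm, mul_comm, ← Set.mem_ofPred.1 hy]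
    exact hle y
  nlinarith [sq_nonneg (‖y‖ - 1)]

theorem setOf_dotProduct_mulVec_eq_one_nonempty [Nonempty ι] (hP : P.PosDef) :
    {y : ι → ℝ | y ⬝ᵥ P *ᵥ y = 1}.Nonempty := by
  classical
  obtain ⟨e, he⟩ := exists_ne (0 : ι → ℝ)
  have hq : 0 < e ⬝ᵥ P *ᵥ e := by simpa using hP.dotProduct_mulVec_pos he
  refine ⟨(√(e ⬝ᵥ P *ᵥ e))⁻¹ • e, ?_⟩
  rw [Set.mem_ofPred_eq, mulVec_smul, dotProduct_smul, smul_dotProduct, smul_eq_mul, smul_eq_mul,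
    ← mul_assoc, ← sq, inv_pow, Real.sq_sqrt hq.le, inv_mul_cancel₀ hq.ne']

theorem eq_smul_mulVec_of_forall_dotProduct_le (hP : P.PosDef) {g y₀ : ι → ℝ}
    (hy₀ : y₀ ⬝ᵥ P *ᵥ y₀ ≤ 1) (hmax : ∀ y, y ⬝ᵥ P *ᵥ y = 1 → g ⬝ᵥ y ≤ g ⬝ᵥ y₀) :
    g = (g ⬝ᵥ y₀) • P *ᵥ y₀ := by
  classical
  rcases eq_or_ne g 0 with rfl | hg
  · simp
  have hunit : IsUnit P.det := isUnit_iff_ne_zero.2 hP.det_pos.ne'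
  set β := g ⬝ᵥ y₀
  set h := P⁻¹ *ᵥ g
  have hPh : P *ᵥ h = g := by rw [mulVec_mulVec, mul_nonsing_inv P hunit, one_mulVec]
  have hγ : 0 < g ⬝ᵥ h := by simpa using hP.inv.dotProduct_mulVec_pos hg
  set s := √(g ⬝ᵥ h)
  have hs : 0 < s := Real.sqrt_pos.2 hγ
  have hs2 : s ^ 2 = g ⬝ᵥ h := Real.sq_sqrt hγ.le
  -- the maximiser of `g ⬝ᵥ ·` on the sphere is `s⁻¹ • P⁻¹ g`, with value `s`
  have hsβ : s ≤ β := by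
    have := hmax (s⁻¹ • h) (by
      rw [mulVec_smul, dotProduct_smul, smul_dotProduct, hPh, dotProduct_comm, ← hs2,
        smul_eq_mul, smul_eq_mul]
      field_simp)
    rwa [dotProduct_smul, ← hs2, smul_eq_mul, pow_two, inv_mul_cancel_left₀ hs.ne'] at this
  set r := g - β • P *ᵥ y₀
  have hr : r ⬝ᵥ P⁻¹ *ᵥ r = s ^ 2 - 2 * β ^ 2 + β ^ 2 * (y₀ ⬝ᵥ P *ᵥ y₀) := by
    have : P⁻¹ *ᵥ r = h - β • y₀ := by
      rw [mulVec_sub, mulVec_smul, mulVec_mulVec, nonsing_inv_mul P hunit, one_mulVec]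
    rw [this, hs2]
    simp only [r, sub_dotProduct, dotProduct_sub, smul_dotProduct, dotProduct_smul, smul_eq_mul]
    rw [dotProduct_comm (P *ᵥ y₀) h, hP.isSymm.dotProduct_mulVec_comm h, hPh,
      dotProduct_comm y₀ g, dotProduct_comm (P *ᵥ y₀) y₀]
    ring
  have hr0 : r = 0 := by
    by_contra hr0
    have := hP.inv.dotProduct_mulVec_pos hr0
    rw [star_trivial, hr] at this
    nlinarith
  exact sub_eq_zero.1 hr0

theorem dotProduct_mulVec_nonneg_of_chord {M : Matrix ι ι ℝ} (hP : P.PosDef) {y₀ : ι → ℝ}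
    (hy₀ : y₀ ⬝ᵥ P *ᵥ y₀ = 1) (hM : ∀ y, y ⬝ᵥ P *ᵥ y = 1 → 0 ≤ (y - y₀) ⬝ᵥ M *ᵥ (y - y₀))
    (d : ι → ℝ) : 0 ≤ d ⬝ᵥ M *ᵥ d := by
  have ha : P *ᵥ y₀ ≠ 0 := fun h0 => by simp [h0] at hy₀
  refine (continuous_dotProduct_mulVec_self M).nonneg_of_forall_dotProduct_ne_zero ha
    (fun d hd => ?_) d
  have hd0 : d ≠ 0 := by rintro rfl; simp at hd
  have hq : 0 < d ⬝ᵥ P *ᵥ d := by simpa using hP.dotProduct_mulVec_pos hd0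
  -- the line through `y₀` in direction `d` meets the sphere again at `y₀ + t • d`
  set t := -2 * (P *ᵥ y₀ ⬝ᵥ d) / (d ⬝ᵥ P *ᵥ d)
  have ht : t ≠ 0 := div_ne_zero (mul_ne_zero (by norm_num) hd) hq.ne'
  have htq : t * (d ⬝ᵥ P *ᵥ d) = -2 * (P *ᵥ y₀ ⬝ᵥ d) := div_mul_cancel₀ _ hq.ne'
  have hy : (y₀ + t • d) ⬝ᵥ P *ᵥ (y₀ + t • d) = 1 := by
    rw [hP.isSymm.add_dotProduct_mulVec_add, hy₀, mulVec_smul, dotProduct_smul, smul_dotProduct,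
      dotProduct_smul, hP.isSymm.dotProduct_mulVec_comm, dotProduct_comm, smul_eq_mul,
      smul_eq_mul]
    linear_combination t * htq
  have hchord := hM _ hy
  rw [add_sub_cancel_left, mulVec_smul, dotProduct_smul, smul_dotProduct, smul_eq_mul,
    smul_eq_mul, ← mul_assoc] at hchord
  exact nonneg_of_mul_nonneg_right (by linarith) (mul_self_pos.2 ht)

end PosDef

/-- With the multiplier rule `y₀ + c = β P y₀`, the Lagrangian `|y + c|² - β yᵀPy` is a
quadratic in `y - y₀` with no linear term. -/
theorem IsSymm.lagrangian_add [DecidableEq ι] {P : Matrix ι ι ℝ} (hP : P.IsSymm) {β : ℝ}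
    {c y₀ : ι → ℝ} (hg : y₀ + c = β • P *ᵥ y₀) (d : ι → ℝ) :
    (y₀ + d + c) ⬝ᵥ (y₀ + d + c) - β * ((y₀ + d) ⬝ᵥ P *ᵥ (y₀ + d)) + d ⬝ᵥ (β • P - 1) *ᵥ d =
      (y₀ + c) ⬝ᵥ (y₀ + c) - β * (y₀ ⬝ᵥ P *ᵥ y₀) := by
  have hgd : (y₀ + c) ⬝ᵥ d = β * (y₀ ⬝ᵥ P *ᵥ d) := by
    rw [hg, smul_dotProduct, dotProduct_comm, hP.dotProduct_mulVec_comm, smul_eq_mul]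
  rw [add_right_comm, add_dotProduct_add_self, hP.add_dotProduct_mulVec_add,
    dotProduct_smul_sub_one_mulVec, hgd]
  ring

theorem PosDef.exists_sLemma_multiplier {P : Matrix ι ι ℝ} (hP : P.PosDef) (c : ι → ℝ)
    (h : ∀ y, y ⬝ᵥ P *ᵥ y = 1 → (y + c) ⬝ᵥ (y + c) ≤ 1) :
    ∃ β, 0 ≤ β ∧ ∀ y, (y + c) ⬝ᵥ (y + c) ≤ 1 + β * (y ⬝ᵥ P *ᵥ y - 1) := by
  classical
  rcases isEmpty_or_nonempty ι with _ | _
  · exact ⟨0, le_rfl, fun y => by simp [dotProduct]⟩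
  obtain ⟨y₀, hy₀, hmax⟩ := hP.isCompact_setOf_dotProduct_mulVec_eq_one.exists_isMaxOn
    hP.setOf_dotProduct_mulVec_eq_one_nonempty
    (by fun_prop : Continuous fun y : ι → ℝ => (y + c) ⬝ᵥ (y + c)).continuousOn
  replace hy₀ : y₀ ⬝ᵥ P *ᵥ y₀ = 1 := hy₀
  replace hmax : ∀ y, y ⬝ᵥ P *ᵥ y = 1 → (y + c) ⬝ᵥ (y + c) ≤ (y₀ + c) ⬝ᵥ (y₀ + c) :=
    isMaxOn_iff.1 hmax
  set β := (y₀ + c) ⬝ᵥ y₀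
  have hlin : ∀ y, y ⬝ᵥ P *ᵥ y = 1 → (y₀ + c) ⬝ᵥ y ≤ β := fun y hy =>
    dotProduct_le_of_add_dotProduct_add_le (hmax y hy)
  have hg : y₀ + c = β • P *ᵥ y₀ := hP.eq_smul_mulVec_of_forall_dotProduct_le hy₀.le hlin
  have hβ : 0 ≤ β := by
    have := hlin (-y₀) (by simpa [mulVec_neg] using hy₀)
    rw [dotProduct_neg] at this
    linarith
  have hlag := hP.isSymm.lagrangian_add hg
  have hM : ∀ d, 0 ≤ d ⬝ᵥ (β • P - 1) *ᵥ d := by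
    refine hP.dotProduct_mulVec_nonneg_of_chord hy₀ fun y hy => ?_
    have := hlag (y - y₀)
    rw [add_sub_cancel, hy, hy₀] at this
    linarith [hmax y hy]
  refine ⟨β, hβ, fun y => ?_⟩
  have := hlag (y - y₀)
  rw [add_sub_cancel, hy₀] at this
  linarith [h y₀ hy₀, hM (y - y₀)]

end Matrix

variable {n : ℕ} {P : Matrix (Fin n) (Fin n) ℝ}

theorem isSymm_Fmat (hP : P.IsSymm) (c : Fin n → ℝ) (β : ℝ) : (Fmat P c β).IsSymm :=
  IsSymm.fromBlocks ((hP.smul β).sub isSymm_one) (by ext; rfl)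
    (IsSymm.ext fun i j => by rw [Subsingleton.elim i j])

theorem sumElim_dotProduct_Fmat_mulVec (hP : P.IsSymm) (c : Fin n → ℝ) (β : ℝ) (x : Fin n → ℝ)
    (t : ℝ) :
    Sum.elim x (fun _ => t) ⬝ᵥ Fmat P c β *ᵥ Sum.elim x (fun _ => t) =
      β * ((x - t • c) ⬝ᵥ P *ᵥ (x - t • c)) - x ⬝ᵥ x + t ^ 2 * (1 - β) := by
  set B : Matrix (Fin n) (Fin 1) ℝ := of fun i _ => -β * (P *ᵥ c) i
  have hB : B *ᵥ (fun _ => t) = (-(β * t)) • P *ᵥ c := by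
    ext i
    simp [B, mulVec, dotProduct]
    ring
  have hD : (fun _ : Fin 1 => t) ⬝ᵥ (of fun (_ : Fin 1) (_ : Fin 1) => β * (c ⬝ᵥ P *ᵥ c - 1) + 1)
      *ᵥ (fun _ => t) = t ^ 2 * (β * (c ⬝ᵥ P *ᵥ c - 1) + 1) := by
    simp [mulVec, dotProduct]
    ring
  rw [Fmat, fromBlocks_mulVec, sumElim_dotProduct_sumElim, Sum.elim_comp_inl, Sum.elim_comp_inr,
    dotProduct_add, dotProduct_add, hD]
  change _ + x ⬝ᵥ B *ᵥ _ + ((fun _ => t) ⬝ᵥ Bᵀ *ᵥ x + _) = _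
  rw [dotProduct_transpose_mulVec, hB, dotProduct_smul_sub_one_mulVec, sub_eq_add_neg x,
    hP.add_dotProduct_mulVec_add, ← neg_smul]
  simp only [mulVec_smul, dotProduct_smul, smul_dotProduct, smul_eq_mul]
  ring

theorem posSemidef_Fmat_iff (hP : P.IsSymm) (c : Fin n → ℝ) (β : ℝ) :
    (Fmat P c β).PosSemidef ↔ ∀ y, (y + c) ⬝ᵥ (y + c) ≤ 1 + β * (y ⬝ᵥ P *ᵥ y - 1) := by
  constructor
  · intro hF y
    have := hF.dotProduct_mulVec_nonneg (Sum.elim (y + c) fun _ => 1)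
    rw [star_trivial, sumElim_dotProduct_Fmat_mulVec hP, one_smul, add_sub_cancel_right,
      one_pow] at this
    linarith
  intro h
  refine PosSemidef.of_dotProduct_mulVec_nonneg (isHermitian_iff_isSymm.2 (isSymm_Fmat hP c β))
    fun z => ?_
  rw [star_trivial]
  refine (continuous_dotProduct_mulVec_self _).nonneg_of_forall_dotProduct_ne_zero
    (a := Pi.single (Sum.inr 0) 1) (by simp) (fun z hz => ?_) z
  rw [single_dotProduct, one_mul] at hz
  have hsplit : z = Sum.elim (z ∘ Sum.inl) fun _ => z (Sum.inr 0) := by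
    ext (i | i)
    · rfl
    · rw [Fin.fin_one_eq_zero i]; rfl
  rw [hsplit, sumElim_dotProduct_Fmat_mulVec hP]
  set t := z (Sum.inr 0)
  set y := t⁻¹ • (z ∘ Sum.inl) - c
  have hy : z ∘ Sum.inl = t • (y + c) := by simp [y, smul_smul, mul_inv_cancel₀ hz]
  rw [hy, ← smul_sub, add_sub_cancel_right]
  simp only [mulVec_smul, dotProduct_smul, smul_dotProduct, smul_eq_mul]
  nlinarith [mul_nonneg (sq_nonneg t) (sub_nonneg.2 (h y))]

theorem stmt_14 {n : ℕ} (P : Matrix (Fin n) (Fin n) ℝ) (c : Fin n → ℝ) (hP : P.PosDef) :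
    Ellipsoid c P ⊆ UnitBall n ↔ ∃ β : ℝ, 0 ≤ β ∧ (Fmat P c β).PosSemidef := by
  have hsub : Ellipsoid c P ⊆ UnitBall n ↔
      ∀ y, y ⬝ᵥ P *ᵥ y ≤ 1 → (y + c) ⬝ᵥ (y + c) ≤ 1 := by
    refine ⟨fun h y hy => h (by simpa [Ellipsoid] using hy), fun h x hx => ?_⟩
    simpa [UnitBall] using h (x - c) hx
  simp_rw [hsub, posSemidef_Fmat_iff hP.isSymm]
  refine ⟨fun h => hP.exists_sLemma_multiplier c fun y hy => h y hy.le,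
    fun ⟨β, hβ, h⟩ y hy => ?_⟩
  nlinarith [h y, mul_nonneg hβ (sub_nonneg.2 hy)]
end
end

section
/- Let P ∈ ℝ^{n×n} be symmetric positive definite with smallest eigenvalue λ_min(P), and let c ∈ ℝⁿ. If 1 − cᵀc < 1/λ_min(P), then E(c,P) is not contained in B(0,1). Equivalently, E(c,P) ⊆ B(0,1) implies cᵀc + 1/λ_min(P) ≤ 1. -/
open Matrix

noncomputable section

/-!
The eigenvector `w` of `P` for `lammin`, scaled so that `wᵀ P w = 1`, has `wᵀw = 1 / lammin`,
and both `c + w` and `c - w` lie on the boundary of `E(c, P)`. If they lie in the unit ball,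
the parallelogram law gives `2 (cᵀc + wᵀw) = |c + w|² + |c - w|² ≤ 2`.
-/

section DotProduct

variable {ι : Type*} [Fintype ι]

lemma dotProduct_self_pos {v : ι → ℝ} (hv : v ≠ 0) : 0 < v ⬝ᵥ v :=
  dotProduct_star_self_pos_iff.mpr hv

lemma add_dotProduct_add_add_sub_dotProduct_sub (c w : ι → ℝ) :
    (c + w) ⬝ᵥ (c + w) + (c - w) ⬝ᵥ (c - w) = 2 * (c ⬝ᵥ c + w ⬝ᵥ w) := by
  simp only [add_dotProduct, dotProduct_add, sub_dotProduct, dotProduct_sub, dotProduct_comm w c]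
  ring

lemma Matrix.PosDef.pos_of_mulVec_eq_smul_s16 {P : Matrix ι ι ℝ} (hP : P.PosDef) {μ : ℝ}
    {v : ι → ℝ} (hv : v ≠ 0) (hPv : P *ᵥ v = μ • v) : 0 < μ := by
  have hquad : 0 < v ⬝ᵥ P *ᵥ v := by simpa using hP.dotProduct_mulVec_pos hv
  rw [hPv, dotProduct_smul, smul_eq_mul] at hquad
  exact pos_of_mul_pos_left hquad (dotProduct_self_pos hv).le

lemma exists_mulVec_eq_smul_dotProduct_self_eq {P : Matrix ι ι ℝ} {μ : ℝ} {v : ι → ℝ}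
    (hv : v ≠ 0) (hPv : P *ᵥ v = μ • v) {r : ℝ} (hr : 0 ≤ r) :
    ∃ w, P *ᵥ w = μ • w ∧ w ⬝ᵥ w = r := by
  have hs := dotProduct_self_pos hv
  refine ⟨√(r / (v ⬝ᵥ v)) • v, by rw [mulVec_smul, hPv, smul_comm], ?_⟩
  rw [smul_dotProduct, dotProduct_smul, smul_smul, smul_eq_mul,
    Real.mul_self_sqrt (by positivity), div_mul_cancel₀ r hs.ne']

end DotProduct

lemma add_mem_ellipsoid_iff {n : ℕ} {c w : Fin n → ℝ} {P : Matrix (Fin n) (Fin n) ℝ} :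
    c + w ∈ Ellipsoid c P ↔ w ⬝ᵥ P *ᵥ w ≤ 1 := by
  simp only [Ellipsoid, Set.mem_ofPred_eq, add_sub_cancel_left]

lemma sub_mem_ellipsoid_iff {n : ℕ} {c w : Fin n → ℝ} {P : Matrix (Fin n) (Fin n) ℝ} :
    c - w ∈ Ellipsoid c P ↔ w ⬝ᵥ P *ᵥ w ≤ 1 := by
  rw [sub_eq_add_neg, add_mem_ellipsoid_iff, mulVec_neg, neg_dotProduct, dotProduct_neg, neg_neg]

theorem stmt_16_general {n : ℕ} (P : Matrix (Fin n) (Fin n) ℝ) (c : Fin n → ℝ) (hP : P.PosDef)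
    (lammin : ℝ)
    (hev : ∃ v : Fin n → ℝ, v ≠ 0 ∧ P.mulVec v = lammin • v)
    (h : Ellipsoid c P ⊆ UnitBall n) :
    c ⬝ᵥ c + 1 / lammin ≤ 1 := by
  obtain ⟨v, hv, hPv⟩ := hev
  have hlam : 0 < lammin := hP.pos_of_mulVec_eq_smul_s16 hv hPv
  obtain ⟨w, hPw, hww⟩ :=
    exists_mulVec_eq_smul_dotProduct_self_eq hv hPv (one_div_pos.mpr hlam).le
  have hwPw : w ⬝ᵥ P *ᵥ w = 1 := by
    rw [hPw, dotProduct_smul, hww, smul_eq_mul, mul_one_div_cancel hlam.ne']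
  have hplus : (c + w) ⬝ᵥ (c + w) ≤ 1 := h (add_mem_ellipsoid_iff.mpr hwPw.le)
  have hminus : (c - w) ⬝ᵥ (c - w) ≤ 1 := h (sub_mem_ellipsoid_iff.mpr hwPw.le)
  linarith [add_dotProduct_add_add_sub_dotProduct_sub c w]

theorem stmt_16 {n : ℕ} (P : Matrix (Fin n) (Fin n) ℝ) (c : Fin n → ℝ) (hP : P.PosDef)
    (lammin : ℝ)
    (hev : ∃ v : Fin n → ℝ, v ≠ 0 ∧ P.mulVec v = lammin • v)
    (hle : ∀ (μ : ℝ) (v : Fin n → ℝ), v ≠ 0 → P.mulVec v = μ • v → lammin ≤ μ)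
    (h : Ellipsoid c P ⊆ UnitBall n) :
    c ⬝ᵥ c + 1 / lammin ≤ 1 :=
  stmt_16_general P c hP lammin hev h
end
end
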